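/- arXiv:1307.6580 — 9 statements merged into one kernel-verified Lean document; each statement's English description precedes it below -/
import Mathlib

section
/- The monoid M presented by ⟨x, y, e | e³ = e, xey = y, xe²y = x, xy = 1⟩ is congruence-free: every congruence on M is either the equality relation or the universal relation M × M. -/
/-- The alphabet `A = {x, y, e}`. -/
inductive Alpha : Type
  | x | y | e
  deriving DecidableEq

/-- The defining relations `e³ = e`, `xey = y`, `xe²y = x`, `xy = 1`. -/
def rel : FreeMonoid Alpha → FreeMonoid Alpha → Prop := fun a b =>
  (a = .of .e * .of .e * .of .e ∧ b = .of .e) ∨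
  (a = .of .x * .of .e * .of .y ∧ b = .of .y) ∨
  (a = .of .x * .of .e * .of .e * .of .y ∧ b = .of .x) ∨
  (a = .of .x * .of .y ∧ b = 1)

/-- The monoid `M = ⟨x, y, e | e³ = e, xey = y, xe²y = x, xy = 1⟩`. -/
abbrev M := PresentedMonoid rel

/-- The image of `x` in `M`. -/
def X : M := PresentedMonoid.of rel .x
/-- The image of `y` in `M`. -/
def Y : M := PresentedMonoid.of rel .y
/-- The image of `e` in `M`. -/
def E : M := PresentedMonoid.of rel .e

/-!
Every element of `M` is represented by a word `e^i₁ y ⋯ e^iₘ y · e^d · x e^jₙ ⋯ x e^j₁` with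
exponents in `{0, 1, 2}`; uniqueness of this representation is never needed. A congruence that
identifies two distinct powers of `y` is universal: `1 ~ yᵐ` and `1 ~ xᵐ` give `u ~ xᵐ u yᵐ`, hence
`e ~ y` and `e² ~ x`, so `1 = xy ~ e³ = e` and every generator is identified with `1`.

Each block `e^i y` absorbs a fixed number of `x` from the left and each block `x e^j` a fixed number
of `y` from the right, so for large `T` and `K` the element `xᵀ w yᴷ` is a power of `y` whose
exponent, up to a shift not depending on `w`, is the difference of the two counts. Hence a
congruence other than `⊤` relating two representatives gives them equal differences, also after
multiplying by `e` on either side. This forces their outermost exponents to agree and excludes the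
shapes in which neither end can be peeled; the outermost blocks, which have one-sided inverses,
are then cancelled on both sides, and induction on the length concludes.
-/

theorem E_mul_E_mul_E : E * E * E = E :=
  PresentedMonoid.mk_eq_mk_of_rel (Or.inl ⟨rfl, rfl⟩)

theorem X_mul_E_mul_Y : X * E * Y = Y :=
  PresentedMonoid.mk_eq_mk_of_rel (Or.inr <| Or.inl ⟨rfl, rfl⟩)

theorem X_mul_E_mul_E_mul_Y : X * E * E * Y = X :=
  PresentedMonoid.mk_eq_mk_of_rel (Or.inr <| Or.inr <| Or.inl ⟨rfl, rfl⟩)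

theorem X_mul_Y : X * Y = 1 :=
  PresentedMonoid.mk_eq_mk_of_rel (Or.inr <| Or.inr <| Or.inr ⟨rfl, rfl⟩)

theorem X_pow_mul_Y_pow (n : ℕ) : X ^ n * Y ^ n = 1 := by
  induction n with
  | zero => simp
  | succ n ih => rw [pow_succ, pow_succ', mul_assoc, ← mul_assoc X, X_mul_Y, one_mul, ih]

theorem X_pow_mul_Y_pow_of_le {p q : ℕ} (h : p ≤ q) : X ^ p * Y ^ q = Y ^ (q - p) := by
  rw [← Nat.add_sub_cancel' h, pow_add, ← mul_assoc, X_pow_mul_Y_pow, one_mul,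
    Nat.add_sub_cancel_left]

section Congruence

variable {c : Con M}

theorem con_eq_top_of_rel_one (hX : c X 1) (hY : c Y 1) (hE : c E 1) : c = ⊤ := by
  have key (m : M) : c m 1 := by
    induction m using Submonoid.induction_of_closure_eq_top_right
        (PresentedMonoid.closure_range_of rel) with
    | one => exact c.refl 1
    | mul_right m g hg ih =>
      obtain ⟨_ | _ | _, rfl⟩ := hg
      · exact mul_one (1 : M) ▸ c.mul ih hX
      · exact mul_one (1 : M) ▸ c.mul ih hY
      · exact mul_one (1 : M) ▸ c.mul ih hE
  exact eq_top_iff.2 fun a b _ => c.trans (key a) (c.symm (key b))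

theorem X_pow_succ_mul_mul_Y_pow_succ (k : ℕ) (u : M) :
    X ^ (k + 1) * u * Y ^ (k + 1) = X ^ k * (X * u * Y) * Y ^ k := by
  rw [pow_succ X, pow_succ' Y]
  simp only [mul_assoc]

theorem X_pow_mul_Y_mul_Y_pow (k : ℕ) : X ^ k * Y * Y ^ k = Y := by
  rw [mul_assoc, ← pow_succ', X_pow_mul_Y_pow_of_le (by omega), Nat.add_sub_cancel_left, pow_one]

theorem X_pow_mul_X_mul_Y_pow (k : ℕ) : X ^ k * X * Y ^ k = X := by
  rw [← pow_succ, pow_succ', mul_assoc, X_pow_mul_Y_pow, mul_one]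

theorem con_eq_top_of_one_Y_pow {m : ℕ} (hm : m ≠ 0) (h : c 1 (Y ^ m)) : c = ⊤ := by
  have hX : c 1 (X ^ m) := by
    simpa [X_pow_mul_Y_pow] using c.mul (c.refl (X ^ m)) (c.symm h)
  obtain ⟨k, rfl⟩ := Nat.exists_eq_succ_of_ne_zero hm
  have conj (u : M) : c u (X ^ k * (X * u * Y) * Y ^ k) := by
    simpa [← X_pow_succ_mul_mul_Y_pow_succ] using c.mul (c.mul hX (c.refl u)) h
  have hEY : c E Y := by simpa [X_mul_E_mul_Y, X_pow_mul_Y_mul_Y_pow] using conj E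
  have hEEX : c (E * E) X := by
    simpa [← mul_assoc, X_mul_E_mul_E_mul_Y, X_pow_mul_X_mul_Y_pow] using conj (E * E)
  have hE : c E 1 := by simpa [E_mul_E_mul_E, X_mul_Y] using c.mul hEEX hEY
  have hEE : c (E * E) 1 := by simpa using c.mul hE hE
  exact con_eq_top_of_rel_one (c.trans (c.symm hEEX) hEE) (c.trans (c.symm hEY) hE) hE

theorem con_eq_top_of_Y_pow {p q : ℕ} (hpq : p ≠ q) (h : c (Y ^ p) (Y ^ q)) : c = ⊤ := by
  wlog hlt : p < q generalizing p q
  · exact this (Ne.symm hpq) (c.symm h) (by omega)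
  have := c.mul (c.refl (X ^ p)) h
  rw [X_pow_mul_Y_pow, X_pow_mul_Y_pow_of_le hlt.le] at this
  exact con_eq_top_of_one_Y_pow (by omega) this

end Congruence

inductive EExp : Type
  | zero | one | two

namespace EExp

def val : EExp → ℕ
  | zero => 0 | one => 1 | two => 2

/-- The exponent of `eᵏ · e`, reduced by `e³ = e`. -/
def next : EExp → EExp
  | zero => one | one => two | two => one

/-- How many `x` on its left the block `eᵏ y` absorbs. -/
def xCost : EExp → ℕ
  | zero => 1 | one => 2 | two => 0

/-- How many `y` on its right the block `x eᵏ` absorbs. -/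
def yCost : EExp → ℕ
  | zero => 1 | one => 0 | two => 2

def drift (k : EExp) : ℤ := k.next.xCost - k.xCost

def yInv : EExp → M
  | zero => X | one => X ^ 2 | two => X ^ 2 * E

def xInv : EExp → M
  | zero => Y | one => E * Y ^ 2 | two => Y ^ 2

theorem next_ne (k : EExp) : k.next ≠ k := by
  cases k <;> simp [next]

theorem xCost_add_yCost (k : EExp) : k.xCost + k.yCost = 2 := by
  cases k <;> rfl

theorem yCost_sub_yCost_next (k : EExp) : (k.yCost : ℤ) - k.next.yCost = k.drift := by
  cases k <;> rfl

theorem drift_injective : Function.Injective drift := by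
  intro a b h
  cases a <;> cases b <;> first | rfl | exact absurd h (by decide)

theorem E_pow_next (k : EExp) : E ^ k.next.val = E ^ k.val * E := by
  cases k <;> simp [next, val, pow_succ, E_mul_E_mul_E]

theorem E_pow_next' (k : EExp) : E ^ k.next.val = E * E ^ k.val := by
  rw [E_pow_next, ← pow_succ, pow_succ']

theorem X_pow_mul_E_pow_mul_Y (k : EExp) : X ^ (k.xCost + 1) * (E ^ k.val * Y) = X := by
  cases k
  · rw [xCost, val, pow_zero, one_mul, pow_succ, pow_one, mul_assoc, X_mul_Y, mul_one]
  · rw [xCost, val, pow_one, pow_succ, sq, mul_assoc, mul_assoc, ← mul_assoc X E, X_mul_E_mul_Y,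
      X_mul_Y, mul_one]
  · rw [xCost, val, zero_add, pow_one, sq, ← mul_assoc, ← mul_assoc, X_mul_E_mul_E_mul_Y]

theorem X_mul_E_pow_mul_Y_pow (k : EExp) : X * E ^ k.val * Y ^ (k.yCost + 1) = Y := by
  cases k
  · rw [yCost, val, pow_zero, mul_one, pow_succ', pow_one, ← mul_assoc, X_mul_Y, one_mul]
  · rw [yCost, val, pow_one, zero_add, pow_one, X_mul_E_mul_Y]
  · rw [yCost, val, sq, pow_succ, sq]
    simp only [← mul_assoc]
    rw [X_mul_E_mul_E_mul_Y, X_mul_Y, one_mul]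

theorem yInv_mul (k : EExp) : k.yInv * (E ^ k.val * Y) = 1 := by
  cases k
  · rw [yInv, val, pow_zero, one_mul, X_mul_Y]
  · rw [yInv, val, pow_one, sq, mul_assoc, ← mul_assoc X E, X_mul_E_mul_Y, X_mul_Y]
  · rw [yInv, val, sq, sq, mul_assoc, ← mul_assoc E, ← mul_assoc E, E_mul_E_mul_E, mul_assoc X,
      ← mul_assoc X E, X_mul_E_mul_Y, X_mul_Y]

theorem mul_xInv (k : EExp) : X * E ^ k.val * k.xInv = 1 := by
  cases k
  · rw [xInv, val, pow_zero, mul_one, X_mul_Y]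
  · rw [xInv, val, pow_one, sq, ← mul_assoc, ← mul_assoc, X_mul_E_mul_E_mul_Y, X_mul_Y]
  · rw [xInv, val, sq, sq, ← mul_assoc, ← mul_assoc, X_mul_E_mul_E_mul_Y, X_mul_Y]

end EExp

/-- `⟨[i₁, …, iₘ], d, [j₁, …, jₙ]⟩` stands for `e^i₁ y ⋯ e^iₘ y · e^d · x e^jₙ ⋯ x e^j₁`: the
`x`-blocks are listed from the right, so that right multiplication acts on the head of `xs`. -/
structure NF where
  ys : List EExp
  mid : EExp
  xs : List EExp

def yPart (s : List EExp) : M := (s.map fun i => E ^ i.val * Y).prod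

def xPart : List EExp → M
  | [] => 1
  | j :: r => xPart r * (X * E ^ j.val)

theorem X_pow_mul_yPart (s : List EExp) (t : ℕ) :
    X ^ ((s.map EExp.xCost).sum + t + 1) * yPart s = X ^ (t + 1) := by
  induction s with
  | nil => simp [yPart]
  | cons i s ih =>
    rw [List.map_cons, List.sum_cons, show i.xCost + (s.map EExp.xCost).sum + t + 1 =
      (s.map EExp.xCost).sum + t + (i.xCost + 1) by omega, pow_add, yPart, List.map_cons,
      List.prod_cons, ← yPart, mul_assoc, ← mul_assoc (X ^ (i.xCost + 1)),
      EExp.X_pow_mul_E_pow_mul_Y, ← mul_assoc, ← pow_succ, ih]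

theorem xPart_mul_Y_pow (r : List EExp) (t : ℕ) :
    xPart r * Y ^ ((r.map EExp.yCost).sum + t + 1) = Y ^ (t + 1) := by
  induction r with
  | nil => simp [xPart]
  | cons j r ih =>
    rw [List.map_cons, List.sum_cons, show j.yCost + (r.map EExp.yCost).sum + t + 1 =
      (j.yCost + 1) + ((r.map EExp.yCost).sum + t) by omega, pow_add, xPart, mul_assoc,
      ← mul_assoc (X * _), EExp.X_mul_E_pow_mul_Y_pow, ← pow_succ', ih]

namespace NF

variable {c : Con M}

def toM (n : NF) : M := yPart n.ys * E ^ n.mid.val * xPart n.xs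

def xCost (n : NF) : ℕ := (n.ys.map EExp.xCost).sum + n.mid.xCost

def yCost (n : NF) : ℕ := (n.xs.map EExp.yCost).sum

def bal (n : NF) : ℤ := n.xCost - n.yCost

theorem X_pow_mul_toM_mul_Y_pow (n : NF) (t k : ℕ) :
    X ^ (n.xCost + t + 1) * n.toM * Y ^ (n.yCost + t + k + 2) = Y ^ k := by
  obtain ⟨s, d, r⟩ := n
  have hy : yPart (s ++ [d]) = yPart s * (E ^ d.val * Y) := by
    simp [yPart]
  calc X ^ (xCost ⟨s, d, r⟩ + t + 1) * toM ⟨s, d, r⟩ * Y ^ (yCost ⟨s, d, r⟩ + t + k + 2)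
      = X ^ (((s ++ [d]).map EExp.xCost).sum + t + 1) * (yPart s * E ^ d.val) *
          (xPart r * Y ^ ((r.map EExp.yCost).sum + (t + k + 1) + 1)) := by
        simp only [toM, xCost, yCost, List.map_append, List.sum_append, List.map_cons,
          List.map_nil, List.sum_cons, List.sum_nil, add_zero, mul_assoc]
        rw [show (r.map EExp.yCost).sum + (t + k + 1) + 1 = (r.map EExp.yCost).sum + t + k + 2 by
          omega]
    _ = X ^ (((s ++ [d]).map EExp.xCost).sum + t + 1) * yPart (s ++ [d]) * Y ^ (t + k + 1) := by
        rw [xPart_mul_Y_pow, hy, pow_succ' Y]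
        simp only [mul_assoc]
    _ = Y ^ k := by
        rw [X_pow_mul_yPart, X_pow_mul_Y_pow_of_le (by omega),
          show t + k + 1 - (t + 1) = k by omega]

theorem con_eq_top_of_bal_ne {n n' : NF} (h : c n.toM n'.toM) (hb : n.bal ≠ n'.bal) :
    c = ⊤ := by
  have hn := X_pow_mul_toM_mul_Y_pow n n'.xCost (n'.yCost + n.xCost)
  have hn' := X_pow_mul_toM_mul_Y_pow n' n.xCost (n.yCost + n'.xCost)
  rw [show n'.xCost + n.xCost = n.xCost + n'.xCost by omega,
    show n'.yCost + n.xCost + (n.yCost + n'.xCost) + 2 =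
      n.yCost + n'.xCost + (n'.yCost + n.xCost) + 2 by omega] at hn'
  have := c.mul (c.mul (c.refl (X ^ (n.xCost + n'.xCost + 1))) h)
    (c.refl (Y ^ (n.yCost + n'.xCost + (n'.yCost + n.xCost) + 2)))
  rw [hn, hn'] at this
  exact con_eq_top_of_Y_pow (by unfold bal at hb; omega) this

def mulE : NF → NF
  | ⟨s, d, []⟩ => ⟨s, d.next, []⟩
  | ⟨s, d, j :: r⟩ => ⟨s, d, j.next :: r⟩

def eMul : NF → NF
  | ⟨[], d, r⟩ => ⟨[], d.next, r⟩
  | ⟨i :: s, d, r⟩ => ⟨i.next :: s, d, r⟩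

def leftExp : NF → EExp
  | ⟨[], d, _⟩ => d
  | ⟨i :: _, _, _⟩ => i

def rightExp : NF → EExp
  | ⟨_, d, []⟩ => d
  | ⟨_, _, j :: _⟩ => j

theorem toM_mulE (n : NF) : n.mulE.toM = n.toM * E := by
  obtain ⟨s, d, _ | ⟨j, r⟩⟩ := n <;>
    simp [mulE, toM, xPart, EExp.E_pow_next, mul_assoc]

theorem toM_eMul (n : NF) : n.eMul.toM = E * n.toM := by
  obtain ⟨_ | ⟨i, s⟩, d, r⟩ := n <;>
    simp [eMul, toM, yPart, EExp.E_pow_next', mul_assoc]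

theorem bal_mulE (n : NF) : n.mulE.bal = n.bal + n.rightExp.drift := by
  obtain ⟨s, d, _ | ⟨j, r⟩⟩ := n
  · simp [mulE, rightExp, bal, xCost, yCost, EExp.drift]
  · simp [mulE, rightExp, bal, xCost, yCost, ← EExp.yCost_sub_yCost_next]
    ring

theorem bal_eMul (n : NF) : n.eMul.bal = n.bal + n.leftExp.drift := by
  obtain ⟨_ | ⟨i, s⟩, d, r⟩ := n
  · simp [eMul, leftExp, bal, xCost, yCost, EExp.drift]
  · simp [eMul, leftExp, bal, xCost, yCost, EExp.drift]
    ring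

theorem leftExp_mulE {n : NF} (h : n.ys ≠ [] ∨ n.xs ≠ []) : n.mulE.leftExp = n.leftExp := by
  obtain ⟨_ | ⟨i, s⟩, d, _ | ⟨j, r⟩⟩ := n <;> simp_all [mulE, leftExp]

theorem exists_toM_eq_toM_mul_Y (n : NF) : ∃ n' : NF, n'.toM = n.toM * Y := by
  obtain ⟨s, d, r⟩ := n
  induction r with
  | nil => exact ⟨⟨s ++ [d], .zero, []⟩, by simp [toM, yPart, xPart, EExp.val, mul_assoc]⟩
  | cons j r ih =>
    have hj : toM ⟨s, d, j :: r⟩ * Y = toM ⟨s, d, r⟩ * (X * E ^ j.val * Y) := by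
      simp only [toM, xPart, mul_assoc]
    cases j
    · exact ⟨⟨s, d, r⟩, by rw [hj, EExp.val, pow_zero, mul_one, X_mul_Y, mul_one]⟩
    · obtain ⟨n', hn'⟩ := ih
      exact ⟨n', by rw [hj, EExp.val, pow_one, X_mul_E_mul_Y, hn']⟩
    · refine ⟨⟨s, d, .zero :: r⟩, ?_⟩
      rw [hj, EExp.val, sq, ← mul_assoc X E E, X_mul_E_mul_E_mul_Y]
      simp [toM, xPart, EExp.val, mul_assoc]

theorem exists_toM_eq (m : M) : ∃ n : NF, n.toM = m := by
  induction m using Submonoid.induction_of_closure_eq_top_right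
      (PresentedMonoid.closure_range_of rel) with
  | one => exact ⟨⟨[], .zero, []⟩, by simp [toM, yPart, xPart, EExp.val]⟩
  | mul_right m g hg ih =>
    obtain ⟨n, rfl⟩ := ih
    obtain ⟨_ | _ | _, rfl⟩ := hg
    · exact ⟨⟨n.ys, n.mid, .zero :: n.xs⟩, by simp [toM, xPart, EExp.val, mul_assoc, X]⟩
    · exact exists_toM_eq_toM_mul_Y n
    · exact ⟨n.mulE, toM_mulE n⟩

theorem yInv_mul_toM (i : EExp) (s : List EExp) (d : EExp) (r : List EExp) :
    i.yInv * toM ⟨i :: s, d, r⟩ = toM ⟨s, d, r⟩ := by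
  simp only [toM, yPart, List.map_cons, List.prod_cons, mul_assoc]
  rw [← mul_assoc (E ^ i.val), ← mul_assoc i.yInv, EExp.yInv_mul, one_mul]

theorem toM_mul_xInv (s : List EExp) (d j : EExp) (r : List EExp) :
    toM ⟨s, d, j :: r⟩ * j.xInv = toM ⟨s, d, r⟩ := by
  simp only [toM, xPart, mul_assoc]
  rw [← mul_assoc X, EExp.mul_xInv, mul_one]

/-- What equal balances of `eᵃ n eᵇ` and `eᵃ n' eᵇ` for `a, b ≤ 1` say about `n` and `n'`. -/
structure SameProbes (n n' : NF) : Prop where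
  bal_eq : n.bal = n'.bal
  leftExp_eq : n.leftExp = n'.leftExp
  rightExp_eq : n.rightExp = n'.rightExp
  leftExp_mulE_eq : n.mulE.leftExp = n'.mulE.leftExp

theorem SameProbes.symm {n n' : NF} (h : SameProbes n n') : SameProbes n' n :=
  ⟨h.1.symm, h.2.symm, h.3.symm, h.4.symm⟩

theorem sameProbes_of_ne_top (hc : c ≠ ⊤) {n n' : NF} (h : c n.toM n'.toM) :
    SameProbes n n' := by
  have bal_eq {m m' : NF} (h : c m.toM m'.toM) : m.bal = m'.bal :=
    by_contra fun hb => hc (con_eq_top_of_bal_ne h hb)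
  have eMul_rel {m m' : NF} (h : c m.toM m'.toM) : c m.eMul.toM m'.eMul.toM := by
    rw [toM_eMul, toM_eMul]
    exact c.mul (c.refl E) h
  have hR : c n.mulE.toM n'.mulE.toM := by
    rw [toM_mulE, toM_mulE]
    exact c.mul h (c.refl E)
  have h0 := bal_eq h
  have hL := bal_eq (eMul_rel h)
  have hR' := bal_eq hR
  have hLR := bal_eq (eMul_rel hR)
  exact ⟨h0,
    EExp.drift_injective (by linarith [bal_eMul n, bal_eMul n']),
    EExp.drift_injective (by linarith [bal_mulE n, bal_mulE n']),
    EExp.drift_injective (by linarith [bal_eMul n.mulE, bal_eMul n'.mulE])⟩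

theorem SameProbes.eq_of_atomic {d : EExp} {n' : NF} (h : SameProbes ⟨[], d, []⟩ n') :
    n' = ⟨[], d, []⟩ := by
  by_cases hn' : n'.ys = [] ∧ n'.xs = []
  · obtain ⟨s', d', r'⟩ := n'
    obtain ⟨rfl, rfl⟩ := hn'
    rw [show d' = d from h.leftExp_eq.symm]
  · -- multiplying by `e` on the right changes the leftmost exponent only of `e^d`
    have h1 := h.leftExp_mulE_eq
    rw [leftExp_mulE (not_and_or.1 hn'), ← h.leftExp_eq] at h1
    exact absurd h1 (EExp.next_ne d)

theorem not_sameProbes_nil_cons {d j i d' : EExp} {r s : List EExp} :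
    ¬ SameProbes ⟨[], d, j :: r⟩ ⟨i :: s, d', []⟩ := by
  intro h
  obtain rfl : d = i := h.leftExp_eq
  obtain rfl : j = d' := h.rightExp_eq
  have hb := h.bal_eq
  simp only [bal, xCost, yCost, List.map_nil, List.sum_nil, List.map_cons, List.sum_cons] at hb
  have := j.xCost_add_yCost
  omega

theorem SameProbes.peelable {n n' : NF} (h : SameProbes n n') (hne : n ≠ n') :
    (n.ys ≠ [] ∧ n'.ys ≠ []) ∨ (n.xs ≠ [] ∧ n'.xs ≠ []) := by
  rcases n with ⟨_ | ⟨i, s⟩, d, _ | ⟨j, r⟩⟩ <;> rcases n' with ⟨_ | ⟨i', s'⟩, d', _ | ⟨j', r'⟩⟩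
  all_goals first
    | exact absurd h.eq_of_atomic.symm hne
    | exact absurd h.symm.eq_of_atomic hne
    | exact (not_sameProbes_nil_cons h).elim
    | exact (not_sameProbes_nil_cons h.symm).elim
    | simp

theorem con_eq_top_of_ne {n n' : NF} (hne : n ≠ n') (h : c n.toM n'.toM) : c = ⊤ := by
  induction hk : n.ys.length + n.xs.length using Nat.strong_induction_on generalizing n n' with
  | _ k ih =>
  by_contra hc
  have hp := sameProbes_of_ne_top hc h
  obtain ⟨s, d, r⟩ := n
  obtain ⟨s', d', r'⟩ := n'
  rcases hp.peelable hne with ⟨hs, hs'⟩ | ⟨hr, hr'⟩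
  · obtain ⟨i, s, rfl⟩ : ∃ i t, s = i :: t := List.exists_cons_of_ne_nil hs
    obtain ⟨i', s', rfl⟩ : ∃ i t, s' = i :: t := List.exists_cons_of_ne_nil hs'
    obtain rfl : i = i' := hp.leftExp_eq
    refine hc (ih _ ?_ (n := ⟨s, d, r⟩) (n' := ⟨s', d', r'⟩) ?_ ?_ rfl)
    · simp only [List.length_cons] at hk ⊢
      omega
    · rintro ⟨⟩
      exact hne rfl
    · simpa only [yInv_mul_toM] using c.mul (c.refl i.yInv) h
  · obtain ⟨j, r, rfl⟩ : ∃ j t, r = j :: t := List.exists_cons_of_ne_nil hr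
    obtain ⟨j', r', rfl⟩ : ∃ j t, r' = j :: t := List.exists_cons_of_ne_nil hr'
    obtain rfl : j = j' := hp.rightExp_eq
    refine hc (ih _ ?_ (n := ⟨s, d, r⟩) (n' := ⟨s', d', r'⟩) ?_ ?_ rfl)
    · simp only [List.length_cons] at hk ⊢
      omega
    · rintro ⟨⟩
      exact hne rfl
    · simpa only [toM_mul_xInv] using c.mul h (c.refl j.xInv)

end NF

/-- `M` is congruence-free: every congruence on `M` is the equality relation (`⊥`)
or the universal relation (`⊤`). -/
theorem stmt_1 : ∀ c : Con M, c = ⊥ ∨ c = ⊤ := by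
  intro c
  refine or_iff_not_imp_left.2 fun hbot => ?_
  obtain ⟨a, b, hab, hne⟩ : ∃ a b, c a b ∧ a ≠ b := by
    by_contra! h
    exact hbot (eq_bot_iff.2 h)
  obtain ⟨n, rfl⟩ := NF.exists_toM_eq a
  obtain ⟨n', rfl⟩ := NF.exists_toM_eq b
  exact NF.con_eq_top_of_ne (by rintro rfl; exact hne rfl) hab
end

section
/- In the monoid M presented by ⟨x, y, e | e³ = e, xey = y, xe²y = x, xy = 1⟩, the elements e and 1 are not D-related: there is no c ∈ M such that (there exist u, v ∈ M with e·u = c and c·v = e) and (there exists s ∈ M with s·c = 1). Consequently M is not bisimple. -/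
/-! `M` acts on words by left multiplication on normal forms: `y` is pushed, `e` rewrites the
leading power of `e` using `e³ = e`, and `x` cancels a leading `y`, `ey` or `e²y`. The words
`e^k₁ y ⋯ e^kₙ y` form a set that contains `[]` and is closed under preimages of the action, and
`e·w` lies in it only if `w` is a nonempty such word. So if `s·(e·u) = 1`, the normal form of `u`
is a nonempty product of blocks `eᵏy`. Neither `y` nor `e` erases a letter `y`, hence `e·u·v`
sends `[]` to a word containing `y`, whereas `e` sends it to `[e]`. -/

def mulX : List Alpha → List Alpha
  | .y :: t => t
  | .e :: .y :: t => .y :: t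
  | .e :: .e :: .y :: t => mulX t
  | t => .x :: t

def mulE : List Alpha → List Alpha
  | .e :: .e :: t => mulE t
  | t => .e :: t

theorem mulE_mulE_mulE (w : List Alpha) : mulE (mulE (mulE w)) = mulE w := by
  fun_induction mulE w with
  | case1 t ih => simpa [mulE] using ih
  | case2 t =>
    rcases t with _ | ⟨_ | _ | _, _ | _⟩ <;> simp_all [mulE]

def genAct : Alpha → Function.End (List Alpha)
  | .x => mulX
  | .y => List.cons .y
  | .e => mulE

def toEnd : M →* Function.End (List Alpha) :=
  PresentedMonoid.lift genAct <| by
    rintro a b (⟨rfl, rfl⟩ | ⟨rfl, rfl⟩ | ⟨rfl, rfl⟩ | ⟨rfl, rfl⟩)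
    · exact funext mulE_mulE_mulE
    all_goals rfl

instance : MulAction M (List Alpha) := MulAction.compHom _ toEnd

theorem of_smul_eq_genAct (a : Alpha) (w : List Alpha) :
    PresentedMonoid.of rel a • w = genAct a w :=
  rfl

def ofWord (l : List Alpha) : M := PresentedMonoid.mk rel (FreeMonoid.ofList l)

theorem ofWord_cons (a : Alpha) (l : List Alpha) :
    ofWord (a :: l) = PresentedMonoid.of rel a * ofWord l := rfl

theorem ofWord_surjective : Function.Surjective ofWord := fun m ↦ by
  obtain ⟨w, rfl⟩ := PresentedMonoid.surjective_mk m
  exact ⟨w.toList, rfl⟩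

theorem ofWord_mulE (w : List Alpha) : ofWord (mulE w) = E * ofWord w := by
  fun_induction mulE w with
  | case1 t ih =>
    show ofWord (mulE t) = E * (E * (E * ofWord t))
    rw [ih, ← mul_assoc, ← mul_assoc, E_mul_E_mul_E]
  | case2 t => rfl

theorem ofWord_mulX (w : List Alpha) : ofWord (mulX w) = X * ofWord w := by
  fun_induction mulX w with
  | case1 t =>
    show ofWord t = X * (Y * ofWord t)
    rw [← mul_assoc, X_mul_Y, one_mul]
  | case2 t =>
    show Y * ofWord t = X * (E * (Y * ofWord t))
    rw [← mul_assoc, ← mul_assoc, X_mul_E_mul_Y]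
  | case3 t ih =>
    show ofWord (mulX t) = X * (E * (E * (Y * ofWord t)))
    rw [ih, ← mul_assoc, ← mul_assoc, ← mul_assoc, X_mul_E_mul_E_mul_Y]
  | case4 t => rfl

theorem ofWord_genAct (a : Alpha) (w : List Alpha) :
    ofWord (genAct a w) = PresentedMonoid.of rel a * ofWord w := by
  cases a
  exacts [ofWord_mulX w, rfl, ofWord_mulE w]

theorem ofWord_smul (m : M) (w : List Alpha) : ofWord (m • w) = m * ofWord w := by
  obtain ⟨l, rfl⟩ := ofWord_surjective m
  induction l with
  | nil => exact congrArg ofWord (one_smul M w) |>.trans (one_mul _).symm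
  | cons a l ih => rw [ofWord_cons, mul_smul, of_smul_eq_genAct, ofWord_genAct, ih, mul_assoc]

theorem ofWord_smul_nil (m : M) : ofWord (m • []) = m :=
  (ofWord_smul m []).trans (mul_one m)

theorem mem_mulE {a : Alpha} (ha : a ≠ .e) {w : List Alpha} (h : a ∈ w) : a ∈ mulE w := by
  fun_induction mulE w with
  | case1 t ih => exact ih (by simpa [ha] using h)
  | case2 t => exact List.mem_cons_of_mem _ h

inductive YBlocks : List Alpha → Prop
  | nil : YBlocks []
  | cons_y {t : List Alpha} : YBlocks t → YBlocks (.y :: t)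
  | cons_e {t : List Alpha} : YBlocks t → t ≠ [] → YBlocks (.e :: t)

namespace YBlocks

theorem of_mulE {w : List Alpha} (h : YBlocks (mulE w)) : YBlocks w ∧ w ≠ [] := by
  fun_induction mulE w with
  | case1 t ih =>
    obtain ⟨ht, hne⟩ := ih h
    exact ⟨.cons_e (.cons_e ht hne) (List.cons_ne_nil _ _), List.cons_ne_nil _ _⟩
  | case2 t => cases h with | cons_e ht hne => exact ⟨ht, hne⟩

theorem of_mulX {w : List Alpha} (h : YBlocks (mulX w)) : YBlocks w := by
  fun_induction mulX w with
  | case1 t => exact .cons_y h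
  | case2 t => exact .cons_e h (List.cons_ne_nil _ _)
  | case3 t ih =>
    exact .cons_e (.cons_e (.cons_y (ih h)) (List.cons_ne_nil _ _)) (List.cons_ne_nil _ _)
  | case4 t => nomatch h

theorem of_smul {m : M} {w : List Alpha} (h : YBlocks (m • w)) : YBlocks w := by
  obtain ⟨l, rfl⟩ := ofWord_surjective m
  induction l with
  | nil => exact h
  | cons a l ih =>
    rw [ofWord_cons, mul_smul, of_smul_eq_genAct] at h
    refine ih ?_
    cases a with
    | x => exact of_mulX h
    | y => cases h with | cons_y h => exact h
    | e => exact (of_mulE h).1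

theorem y_mem_ofWord_smul {U : List Alpha} (hU : YBlocks U) (hne : U ≠ [])
    (w : List Alpha) : Alpha.y ∈ ofWord U • w := by
  induction hU with
  | nil => exact (hne rfl).elim
  | cons_y _ _ =>
    rw [ofWord_cons, mul_smul, of_smul_eq_genAct]
    exact List.mem_cons_self
  | cons_e _ ht ih =>
    rw [ofWord_cons, mul_smul, of_smul_eq_genAct]
    exact mem_mulE (by decide) (ih ht)

end YBlocks

theorem not_dRel_E_one : ¬ ∃ c u v s : M, E * u = c ∧ c * v = E ∧ s * c = 1 := by
  rintro ⟨c, u, v, s, rfl, hv, hs⟩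
  have hblocks : YBlocks (mulE (u • [])) := by
    refine YBlocks.of_smul (m := s) ?_
    show YBlocks (s • E • u • [])
    rw [← mul_smul E u, ← mul_smul, hs, one_smul]
    exact .nil
  obtain ⟨hU, hne⟩ := hblocks.of_mulE
  have hy := mem_mulE (by decide) (hU.y_mem_ofWord_smul hne (v • []))
  rw [ofWord_smul_nil] at hy
  change Alpha.y ∈ E • u • v • [] at hy
  rw [← mul_smul, ← mul_smul, hv] at hy
  change Alpha.y ∈ [Alpha.e] at hy
  exact absurd hy (by decide)

theorem exists_mul_eq_of_principal_ideals_eq {N : Type*} [Monoid N] {a b c : N}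
    (hR : {z : N | ∃ m, a * m = z} = {z | ∃ m, c * m = z})
    (hL : {z : N | ∃ m, m * c = z} = {z | ∃ m, m * b = z}) :
    (∃ u, a * u = c) ∧ (∃ v, c * v = a) ∧ ∃ s, s * c = b :=
  ⟨(Set.ext_iff.1 hR c).2 ⟨1, mul_one c⟩, (Set.ext_iff.1 hR a).1 ⟨1, mul_one a⟩,
    (Set.ext_iff.1 hL b).2 ⟨1, one_mul b⟩⟩

/-- In `M`, the elements `e` and `1` are not `D`-related; consequently `M` is not bisimple. -/
theorem stmt_3 :
    (¬ ∃ c u v s : M, E * u = c ∧ c * v = E ∧ s * c = 1) ∧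
    ¬ (∀ a b : M, ∃ c : M,
        ({z : M | ∃ m : M, a * m = z} = {z : M | ∃ m : M, c * m = z}) ∧
        ({z : M | ∃ m : M, m * c = z} = {z : M | ∃ m : M, m * b = z})) := by
  refine ⟨not_dRel_E_one, fun hbisimple ↦ ?_⟩
  obtain ⟨c, hR, hL⟩ := hbisimple E 1
  obtain ⟨⟨u, hu⟩, ⟨v, hv⟩, ⟨s, hs⟩⟩ := exists_mul_eq_of_principal_ideals_eq hR hL
  exact not_dRel_E_one ⟨c, u, v, s, hu, hv, hs⟩
end

section
/- The string rewriting system with rules e³ → e, xey → y, xe²y → x, xy → 1 over the alphabet A = {x, y, e} is confluent: if a word w ∈ A* rewrites (in zero or more steps) to both w₁ and w₂, then there exists a word w' such that both w₁ and w₂ rewrite (in zero or more steps) to w'. -/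
/-- The one-step rewriting relation on the free monoid `A*`:
`u·ℓ·v → u·r·v` for each rule `(ℓ, r)`. -/
def Step : FreeMonoid Alpha → FreeMonoid Alpha → Prop := fun a b =>
  ∃ u v l r : FreeMonoid Alpha, rel l r ∧ a = u * l * v ∧ b = u * r * v

namespace Relation

variable {α : Type*} {r : α → α → Prop}

theorem join_reflTransGen_of_normalizer (N : α → α) (h_inv : ∀ a b, r a b → N a = N b)
    (h_reach : ∀ a, ReflTransGen r a (N a)) {a b c : α} (hab : ReflTransGen r a b)
    (hac : ReflTransGen r a c) : Join (ReflTransGen r) b c := by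
  have hN : ∀ {a b}, ReflTransGen r a b → N a = N b := by
    intro a b h
    induction h with
    | refl => rfl
    | tail _ hbc ih => exact ih.trans (h_inv _ _ hbc)
  exact ⟨N a, hN hab ▸ h_reach b, hN hac ▸ h_reach c⟩

end Relation

theorem Step.mul_left (u : FreeMonoid Alpha) {a b : FreeMonoid Alpha} (h : Step a b) :
    Step (u * a) (u * b) := by
  obtain ⟨u', v, l, r, hlr, rfl, rfl⟩ := h
  exact ⟨u * u', v, l, r, hlr, by simp only [mul_assoc], by simp only [mul_assoc]⟩

theorem Step.of_rel {l r : FreeMonoid Alpha} (h : rel l r) (v : FreeMonoid Alpha) :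
    Step (l * v) (r * v) :=
  ⟨1, v, l, r, h, by rw [one_mul], by rw [one_mul]⟩

namespace Alpha

open Relation

def NoCube (w : List Alpha) : Prop := ¬ [e, e, e] <:+: w

def normCons : Alpha → List Alpha → List Alpha
  | e, e :: e :: t => e :: t
  | e, t => e :: t
  | x, e :: y :: t => y :: t
  | x, e :: e :: y :: t => normCons x t
  | x, y :: t => t
  | x, t => x :: t
  | y, t => y :: t

theorem NoCube.tail {c : Alpha} {t : List Alpha} (h : NoCube (c :: t)) : NoCube t :=
  fun h' => h (h'.trans (List.suffix_cons c t).isInfix)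

theorem NoCube.cons {c : Alpha} {t : List Alpha} (h : NoCube t) (hc : ¬ [e, e, e] <+: c :: t) :
    NoCube (c :: t) := by
  simp_all [NoCube, List.infix_cons_iff]

theorem NoCube.normCons (c : Alpha) {t : List Alpha} (h : NoCube t) :
    NoCube (Alpha.normCons c t) := by
  fun_induction Alpha.normCons c t with
  | case1 t => exact h.tail
  | case2 t ht => exact h.cons (by simpa using fun ⟨s, hs⟩ => ht s hs.symm)
  | case3 t => exact h.tail
  | case4 t ih => exact ih h.tail.tail.tail
  | case5 t => exact h.tail
  | case6 t => exact h.cons (by simp)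
  | case7 t => exact h.cons (by simp)

theorem normCons_e_e_e {t : List Alpha} (h : NoCube t) :
    normCons e (normCons e (normCons e t)) = normCons e t := by
  rcases t with _ | ⟨_ | _ | _, _ | ⟨_ | _ | _, _ | ⟨_ | _ | _, _⟩⟩⟩ <;>
    simp_all [normCons, NoCube, List.infix_cons_iff]

theorem normCons_x_e_y (t : List Alpha) :
    normCons x (normCons e (normCons y t)) = normCons y t := by
  simp [normCons]

theorem normCons_x_e_e_y (t : List Alpha) :
    normCons x (normCons e (normCons e (normCons y t))) = normCons x t := by
  simp [normCons]

theorem normCons_x_y (t : List Alpha) : normCons x (normCons y t) = t := by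
  simp [normCons]

def toEnd : FreeMonoid Alpha →* Function.End {t : List Alpha // NoCube t} :=
  FreeMonoid.lift fun c t => ⟨normCons c t, t.2.normCons c⟩

theorem toEnd_of_apply (c : Alpha) (t : {t : List Alpha // NoCube t}) :
    (toEnd (.of c) t).1 = normCons c t := rfl

theorem toEnd_eq_of_rel {l r : FreeMonoid Alpha} (h : rel l r) : toEnd l = toEnd r := by
  funext t
  apply Subtype.ext
  rcases h with ⟨rfl, rfl⟩ | ⟨rfl, rfl⟩ | ⟨rfl, rfl⟩ | ⟨rfl, rfl⟩ <;>
    simp only [map_mul, map_one, Function.End.mul_def, Function.End.one_def,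
      toEnd_of_apply, id]
  · exact normCons_e_e_e t.2
  · exact normCons_x_e_y t
  · exact normCons_x_e_e_y t
  · exact normCons_x_y t

theorem toEnd_eq_of_step {a b : FreeMonoid Alpha} (h : Step a b) : toEnd a = toEnd b := by
  obtain ⟨u, v, l, r, hlr, rfl, rfl⟩ := h
  simp only [map_mul, toEnd_eq_of_rel hlr]

def normalForm (w : FreeMonoid Alpha) : FreeMonoid Alpha :=
  .ofList (toEnd w ⟨[], by simp [NoCube]⟩).1

theorem normalForm_of_mul (c : Alpha) (w : FreeMonoid Alpha) :
    normalForm (.of c * w) = .ofList (normCons c (normalForm w).toList) := by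
  rw [normalForm, map_mul]
  rfl

theorem normalForm_eq_of_step {a b : FreeMonoid Alpha} (h : Step a b) :
    normalForm a = normalForm b := by
  rw [normalForm, normalForm, toEnd_eq_of_step h]

theorem reflTransGen_normCons (c : Alpha) (t : List Alpha) :
    ReflTransGen Step (.ofList (c :: t)) (.ofList (normCons c t)) := by
  fun_induction normCons c t with
  | case1 t => exact .single (Step.of_rel (.inl ⟨rfl, rfl⟩) (.ofList t))
  | case3 t => exact .single (Step.of_rel (.inr (.inl ⟨rfl, rfl⟩)) (.ofList t))
  | case4 t ih => exact .head (Step.of_rel (.inr (.inr (.inl ⟨rfl, rfl⟩))) (.ofList t)) ih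
  | case5 t => exact .single (Step.of_rel (.inr (.inr (.inr ⟨rfl, rfl⟩))) (.ofList t))
  | case2 | case6 | case7 => exact .refl

theorem reflTransGen_normalForm (w : FreeMonoid Alpha) : ReflTransGen Step w (normalForm w) := by
  induction w using FreeMonoid.inductionOn' with
  | one => exact .refl
  | of_mul c w ih =>
    rw [normalForm_of_mul]
    exact (ReflTransGen.lift (.of c * ·) (fun _ _ h => h.mul_left _) _ _ ih).trans
      (reflTransGen_normCons c _)

end Alpha

/-- The rewriting system is confluent. -/
theorem stmt_6 :
    ∀ w w₁ w₂ : FreeMonoid Alpha,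
      Relation.ReflTransGen Step w w₁ → Relation.ReflTransGen Step w w₂ →
      ∃ w' : FreeMonoid Alpha,
        Relation.ReflTransGen Step w₁ w' ∧ Relation.ReflTransGen Step w₂ w' :=
  fun _ _ _ => Relation.join_reflTransGen_of_normalizer Alpha.normalForm
    (fun _ _ => Alpha.normalForm_eq_of_step) Alpha.reflTransGen_normalForm
end

section
/- A word w over the alphabet A = {x, y, e} is irreducible with respect to the rewriting system e³ → e, xey → y, xe²y → x, xy → 1 (i.e., no rewrite rule applies to any factor of w) if and only if w belongs to the language {e, y}*{e, x}* − A*e³A*, that is, w is a word in {e, y}* followed by a word in {e, x}*, and w contains no factor e³. -/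
namespace List

variable {α : Type*}

theorem not_pair_sublist_append {a b : α} {u v : List α} (hu : a ∉ u) (hv : b ∉ v) :
    ¬ [a, b] <+ u ++ v := by
  induction u with
  | nil => exact fun h => hv (h.subset (by simp))
  | cons c u ih =>
    rw [cons_append, sublist_cons_iff]
    rintro (h | ⟨r, hr, -⟩)
    · exact ih (fun h' => hu (mem_cons_of_mem c h')) h
    · exact hu (by simp [(cons_eq_cons.mp hr).1])

theorem exists_eq_append_iff_not_pair_sublist {a b : α} (hab : a ≠ b) {l : List α} :
    (∃ u v, l = u ++ v ∧ a ∉ u ∧ b ∉ v) ↔ ¬ [a, b] <+ l := by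
  refine ⟨fun ⟨u, v, hl, hu, hv⟩ => hl ▸ not_pair_sublist_append hu hv, fun h => ?_⟩
  by_cases ha : a ∈ l
  · obtain ⟨s, t, rfl, hs⟩ := eq_append_cons_of_mem ha
    refine ⟨s, a :: t, rfl, hs, ?_⟩
    rintro (_ | ⟨_, hb⟩)
    · exact hab rfl
    · exact h (cons_sublist_iff.mpr ⟨s ++ [a], t, by simp, by simp, singleton_sublist.mpr hb⟩)
  · exact ⟨l, [], by simp, ha, not_mem_nil⟩

theorem exists_infix_of_pair_sublist {a b : α} {l : List α} (h : [a, b] <+ l) :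
    ∃ m, a ∉ m ∧ b ∉ m ∧ a :: m ++ [b] <:+: l := by
  induction l with
  | nil => simp at h
  | cons c t ih =>
    by_cases ht : [a, b] <+ t
    · obtain ⟨m, ham, hbm, hm⟩ := ih ht
      exact ⟨m, ham, hbm, hm.trans (infix_cons (infix_refl t))⟩
    obtain ⟨r, hr, hrt⟩ := (sublist_cons_iff.mp h).resolve_left ht
    obtain ⟨rfl, rfl⟩ := cons_eq_cons.mp hr
    obtain ⟨s, t', rfl, hs⟩ := eq_append_cons_of_mem (singleton_sublist.mp hrt)
    refine ⟨s, fun has => ht ?_, hs, ?_⟩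
    · exact cons_sublist_iff.mpr ⟨s, b :: t', rfl, has, by simp⟩
    · exact ⟨[], t', by simp⟩

end List

theorem FreeMonoid.exists_eq_mul_mul_iff_infix {α : Type*} {w l : FreeMonoid α} :
    (∃ p q, w = p * l * q) ↔ l.toList <:+: w.toList := by
  constructor
  · rintro ⟨p, q, rfl⟩
    exact ⟨p.toList, q.toList, by simp⟩
  · rintro ⟨p, q, h⟩
    exact ⟨ofList p, ofList q, toList.injective (by simp [h])⟩

open List

namespace Alpha

theorem exists_step_iff (w : FreeMonoid Alpha) :
    (∃ w', Step w w') ↔ [e, e, e] <:+: w.toList ∨ [x, e, y] <:+: w.toList ∨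
      [x, e, e, y] <:+: w.toList ∨ [x, y] <:+: w.toList := by
  have : (∃ w', Step w w') ↔ ∃ l r, rel l r ∧ ∃ p q, w = p * l * q :=
    ⟨fun ⟨_, p, q, l, r, hlr, hw, _⟩ => ⟨l, r, hlr, p, q, hw⟩,
      fun ⟨l, r, hlr, p, q, hw⟩ => ⟨_, p, q, l, r, hlr, hw, rfl⟩⟩
  simp [this, rel, FreeMonoid.exists_eq_mul_mul_iff_infix, or_and_right, exists_or]

theorem exists_split_iff (l : List Alpha) :
    (∃ u v, l = u ++ v ∧ (∀ a ∈ u, a = e ∨ a = y) ∧ (∀ a ∈ v, a = e ∨ a = x)) ↔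
      ¬ [x, y] <+ l := by
  have hy (a : Alpha) : a = e ∨ a = y ↔ a ≠ x := by cases a <;> simp
  have hx (a : Alpha) : a = e ∨ a = x ↔ a ≠ y := by cases a <;> simp
  simp only [hx, hy, ne_eq, forall_mem_ne']
  exact exists_eq_append_iff_not_pair_sublist (by decide)

theorem pair_sublist_iff_of_not_infix {l : List Alpha} (h : ¬ [e, e, e] <:+: l) :
    [x, y] <+ l ↔ [x, y] <:+: l ∨ [x, e, y] <:+: l ∨ [x, e, e, y] <:+: l := by
  refine ⟨fun hxy => ?_, by rintro (h | h | h) <;> exact .trans (by simp) h.sublist⟩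
  obtain ⟨m, hxm, hym, hm⟩ := exists_infix_of_pair_sublist hxy
  have hm_e : m = replicate m.length e :=
    eq_replicate_iff.mpr ⟨rfl, fun a ha => by cases a <;> simp_all⟩
  have hlen : m.length < 3 := by
    by_contra! h3
    have : [e, e, e] <:+: m := by
      rw [hm_e, infix_replicate_iff]
      simpa using h3
    exact h (this.trans (⟨[x], [y], rfl⟩ : m <:+: x :: m ++ [y]) |>.trans hm)
  rw [hm_e] at hm
  generalize m.length = k at hm hlen
  interval_cases k <;>
    simp only [replicate_succ, replicate_zero, cons_append, nil_append] at hm <;> simp [hm]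

end Alpha

/-- A word is irreducible iff it lies in `{e,y}*{e,x}* − A*e³A*`. -/
theorem stmt_7 (w : FreeMonoid Alpha) :
    (¬ ∃ w' : FreeMonoid Alpha, Step w w') ↔
    ((∃ u v : List Alpha, w.toList = u ++ v ∧
        (∀ a ∈ u, a = Alpha.e ∨ a = Alpha.y) ∧
        (∀ a ∈ v, a = Alpha.e ∨ a = Alpha.x)) ∧
      ¬ ∃ p q : FreeMonoid Alpha,
        w = p * (.of .e * .of .e * .of .e) * q) := by
  rw [Alpha.exists_step_iff, Alpha.exists_split_iff, FreeMonoid.exists_eq_mul_mul_iff_infix]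
  simp only [FreeMonoid.toList_mul, FreeMonoid.toList_of, singleton_append]
  by_cases he : [Alpha.e, Alpha.e, Alpha.e] <:+: w.toList
  · tauto
  · rw [Alpha.pair_sublist_iff_of_not_infix he]
    tauto
end

section
/- Every element w of the monoid M presented by ⟨x, y, e | e³ = e, xey = y, xe²y = x, xy = 1⟩ can be written as w = p·e^γ·q for some γ ∈ {0, 1, 2}, some left-invertible p ∈ M, and some right-invertible q ∈ M. -/
/-!
Every `w` factors as `p * E ^ γ * q` with `p` left-invertible and `q` a product of
the right-invertible elements `X * E ^ n`; this form survives right multiplication by each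
generator, the only real case being `Y`, which the relations `xy = 1`, `xey = y`, `xe²y = x`
either absorb into the tail `q` or push through to `E ^ γ * Y`, a left-invertible element.
Finally `e³ = e` brings `γ` into `{0, 1, 2}`.
-/

section Invertibles

variable (N : Type*) [Monoid N]

def leftInvertibles : Submonoid N where
  carrier := {p | ∃ p', p' * p = 1}
  mul_mem' := by
    rintro a b ⟨a', ha⟩ ⟨b', hb⟩
    exact ⟨b' * a', by rw [mul_assoc, ← mul_assoc a', ha, one_mul, hb]⟩
  one_mem' := ⟨1, one_mul 1⟩

def rightInvertibles : Submonoid N where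
  carrier := {q | ∃ q', q * q' = 1}
  mul_mem' := by
    rintro a b ⟨a', ha⟩ ⟨b', hb⟩
    exact ⟨b' * a', by rw [mul_assoc, ← mul_assoc b, hb, one_mul, ha]⟩
  one_mem' := ⟨1, one_mul 1⟩

end Invertibles

section PowThree

variable {N : Type*} [Monoid N] {a : N}

theorem pow_two_mul_add_one_of_pow_three (h : a ^ 3 = a) (n : ℕ) : a ^ (2 * n + 1) = a := by
  induction n with
  | zero => exact pow_one a
  | succ n ih => rw [show 2 * (n + 1) + 1 = 2 * n + 1 + 2 by ring, pow_add, ih, ← pow_succ', h]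

theorem exists_pow_eq_of_pow_three (h : a ^ 3 = a) (n : ℕ) : ∃ m ≤ 2, a ^ n = a ^ m := by
  obtain ⟨k, rfl | rfl⟩ := Nat.even_or_odd' n
  · cases k with
    | zero => exact ⟨0, by norm_num, rfl⟩
    | succ k =>
      refine ⟨2, le_rfl, ?_⟩
      rw [show 2 * (k + 1) = 2 * k + 1 + 1 by ring, pow_succ,
        pow_two_mul_add_one_of_pow_three h, sq]
  · exact ⟨1, by norm_num, (pow_two_mul_add_one_of_pow_three h k).trans (pow_one a).symm⟩

end PowThree

namespace M

theorem E_pow_three : E ^ 3 = E := by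
  rw [pow_succ, sq]
  exact PresentedMonoid.mk_eq_mk_of_rel (Or.inl ⟨rfl, rfl⟩)

theorem X_mul_E_mul_Y : X * E * Y = Y :=
  PresentedMonoid.mk_eq_mk_of_rel (Or.inr (Or.inl ⟨rfl, rfl⟩))

theorem X_mul_E_sq_mul_Y : X * E ^ 2 * Y = X := by
  rw [sq, ← mul_assoc]
  exact PresentedMonoid.mk_eq_mk_of_rel (Or.inr (Or.inr (Or.inl ⟨rfl, rfl⟩)))

theorem X_mul_Y : X * Y = 1 :=
  PresentedMonoid.mk_eq_mk_of_rel (Or.inr (Or.inr (Or.inr ⟨rfl, rfl⟩)))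

theorem E_pow_mul_Y_mem_leftInvertibles (n : ℕ) : E ^ n * Y ∈ leftInvertibles M := by
  refine ⟨X * X * E ^ (n + 1), ?_⟩
  have hE : E ^ (n + 1) * E ^ n = E := by
    rw [← pow_add, show n + 1 + n = 2 * n + 1 by ring,
      pow_two_mul_add_one_of_pow_three E_pow_three]
  calc X * X * E ^ (n + 1) * (E ^ n * Y) = X * (X * (E ^ (n + 1) * E ^ n) * Y) := by
        simp only [mul_assoc]
    _ = 1 := by rw [hE, X_mul_E_mul_Y, X_mul_Y]

theorem X_mul_E_pow_mem_rightInvertibles (n : ℕ) : X * E ^ n ∈ rightInvertibles M := by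
  refine ⟨E ^ (n + 2) * Y * Y, ?_⟩
  have hE : E ^ n * E ^ (n + 2) = E ^ 2 := by
    rw [← pow_add, show n + (n + 2) = 2 * n + 1 + 1 by ring, pow_succ,
      pow_two_mul_add_one_of_pow_three E_pow_three, sq]
  calc X * E ^ n * (E ^ (n + 2) * Y * Y) = X * (E ^ n * E ^ (n + 2)) * Y * Y := by
        simp only [mul_assoc]
    _ = 1 := by rw [hE, X_mul_E_sq_mul_Y, X_mul_Y]

def tails : Submonoid M := Submonoid.closure (Set.range fun n : ℕ => X * E ^ n)

theorem tails_le_rightInvertibles : tails ≤ rightInvertibles M :=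
  Submonoid.closure_le.2 <| Set.range_subset_iff.2 X_mul_E_pow_mem_rightInvertibles

theorem mul_X_mem_tails {q : M} (hq : q ∈ tails) : q * X ∈ tails := by
  simpa using tails.mul_mem hq (Submonoid.subset_closure ⟨0, rfl⟩)

theorem eq_one_or_mul_E_mem_tails {q : M} (hq : q ∈ tails) : q = 1 ∨ q * E ∈ tails := by
  induction hq using Submonoid.closure_induction_right with
  | one => exact .inl rfl
  | mul_right q hq _ hy _ =>
    obtain ⟨n, rfl⟩ := hy
    refine .inr ?_
    rw [mul_assoc, mul_assoc, ← pow_succ]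
    exact tails.mul_mem hq (Submonoid.subset_closure ⟨n + 1, rfl⟩)

theorem mul_Y_eq_Y_or_mem_tails {q : M} (hq : q ∈ tails) : q * Y = Y ∨ q * Y ∈ tails := by
  induction hq using Submonoid.closure_induction_right with
  | one => exact .inl (one_mul Y)
  | mul_right q hq _ hy ih =>
    obtain ⟨n, rfl⟩ := hy
    obtain ⟨m, hm, hn⟩ := exists_pow_eq_of_pow_three E_pow_three n
    simp only [hn, mul_assoc]
    interval_cases m
    · rw [pow_zero, one_mul, X_mul_Y, mul_one]
      exact .inr hq
    · rw [pow_one, ← mul_assoc X, X_mul_E_mul_Y]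
      exact ih
    · rw [← mul_assoc X, X_mul_E_sq_mul_Y]
      exact .inr (mul_X_mem_tails hq)

def Factorizable (w : M) : Prop :=
  ∃ p ∈ leftInvertibles M, ∃ γ : ℕ, ∃ q ∈ tails, w = p * E ^ γ * q

theorem factorizable_one : Factorizable 1 :=
  ⟨1, one_mem _, 0, 1, one_mem _, by simp⟩

theorem Factorizable.mul_X {w : M} (h : Factorizable w) : Factorizable (w * X) := by
  obtain ⟨p, hp, γ, q, hq, rfl⟩ := h
  exact ⟨p, hp, γ, q * X, mul_X_mem_tails hq, by simp only [mul_assoc]⟩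

theorem Factorizable.mul_E {w : M} (h : Factorizable w) : Factorizable (w * E) := by
  obtain ⟨p, hp, γ, q, hq, rfl⟩ := h
  rcases eq_one_or_mul_E_mem_tails hq with rfl | hqE
  · exact ⟨p, hp, γ + 1, 1, one_mem _, by rw [pow_succ, mul_one, mul_one, mul_assoc]⟩
  · exact ⟨p, hp, γ, q * E, hqE, by simp only [mul_assoc]⟩

theorem Factorizable.mul_Y {w : M} (h : Factorizable w) : Factorizable (w * Y) := by
  obtain ⟨p, hp, γ, q, hq, rfl⟩ := h
  rcases mul_Y_eq_Y_or_mem_tails hq with hqY | hqY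
  · refine ⟨p * (E ^ γ * Y), mul_mem hp (E_pow_mul_Y_mem_leftInvertibles γ), 0, 1, one_mem _,
      ?_⟩
    rw [mul_assoc _ q, hqY]
    simp only [pow_zero, mul_one, mul_assoc]
  · exact ⟨p, hp, γ, q * Y, hqY, by simp only [mul_assoc]⟩

theorem factorizable (w : M) : Factorizable w := by
  induction w using Submonoid.induction_of_closure_eq_top_right
    (PresentedMonoid.closure_range_of rel) with
  | one => exact factorizable_one
  | mul_right w _ hs h =>
    obtain ⟨s, rfl⟩ := hs
    cases s
    · exact h.mul_X
    · exact h.mul_Y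
    · exact h.mul_E

end M

/-- Every `w ∈ M` can be written `w = p·e^γ·q` with `γ ∈ {0,1,2}`,
`p` left-invertible and `q` right-invertible. -/
theorem stmt_11 :
    ∀ w : M, ∃ γ : ℕ, γ ≤ 2 ∧ ∃ p q : M,
      (∃ p' : M, p' * p = 1) ∧ (∃ q' : M, q * q' = 1) ∧ w = p * E ^ γ * q := by
  intro w
  obtain ⟨p, hp, γ, q, hq, rfl⟩ := M.factorizable w
  obtain ⟨m, hm, hγ⟩ := exists_pow_eq_of_pow_three M.E_pow_three γ
  exact ⟨m, hm, p, q, hp, M.tails_le_rightInvertibles hq, by rw [hγ]⟩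
end

section
/- Every group homomorphic image of the monoid M presented by ⟨x, y, e | e³ = e, xey = y, xe²y = x, xy = 1⟩ is trivial: for every group G and every monoid homomorphism f : M → G, f(m) = 1 for all m ∈ M. Consequently, the only group congruence on M is the universal congruence M × M. -/
/-! In a group the relation `xy = 1` makes `y = x⁻¹`, so `xey = y` forces `xe = 1`, while `e³ = e`
gives `e² = 1`; then `xe²y = x` reads `xy = x`, i.e. `x = 1`, and hence `y = e = 1`. A congruence
all of whose classes are invertible yields a homomorphism into the unit group of its quotient,
which must therefore be trivial. -/

theorem eq_one_of_presentation_relations {G : Type*} [Group G] {a b c : G}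
    (hc : c * c * c = c) (hacb : a * c * b = b) (haccb : a * c * c * b = a) (hab : a * b = 1) :
    a = 1 ∧ b = 1 ∧ c = 1 := by
  have hac : a * c = 1 := mul_right_cancel (b := b) (by rw [hacb, one_mul])
  have hcc : c * c = 1 := mul_left_cancel (a := c) (by rw [mul_one, ← mul_assoc, hc])
  have ha : a = 1 := by
    rw [← haccb, mul_assoc a c c, hcc, mul_one, hab]
  subst ha
  rw [one_mul] at hac hab
  exact ⟨rfl, hab, hac⟩

theorem monoidHom_eq_one {G : Type*} [Group G] (f : M →* G) : f = 1 := by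
  obtain ⟨hX, hY, hE⟩ := eq_one_of_presentation_relations
    (by rw [← map_mul, ← map_mul, E_mul_E_mul_E] : f E * f E * f E = f E)
    (by rw [← map_mul, ← map_mul, X_mul_E_mul_Y] : f X * f E * f Y = f Y)
    (by rw [← map_mul, ← map_mul, ← map_mul, X_mul_E_mul_E_mul_Y] : f X * f E * f E * f Y = f X)
    (by rw [← map_mul, X_mul_Y, map_one] : f X * f Y = 1)
  ext a
  cases a
  exacts [hX, hY, hE]

theorem Con.isUnit_coe {N : Type*} [Monoid N] {ρ : Con N} {a b : N}
    (hab : ρ (a * b) 1) (hba : ρ (b * a) 1) : IsUnit (a : ρ.Quotient) :=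
  isUnit_iff_exists.2 ⟨b, by rwa [← Con.coe_mul, ← Con.coe_one, Con.eq],
    by rwa [← Con.coe_mul, ← Con.coe_one, Con.eq]⟩

theorem Con.eq_top_of_forall_monoidHom_eq_one {N : Type*} [Monoid N] (ρ : Con N)
    (hunit : ∀ a : N, IsUnit (a : ρ.Quotient)) (htriv : ∀ f : N →* (ρ.Quotient)ˣ, f = 1) :
    ρ = ⊤ := by
  have hone (a : N) : ρ a 1 := by
    have : (a : ρ.Quotient) = 1 :=
      congrArg Units.val (DFunLike.congr_fun (htriv (IsUnit.liftRight ρ.mk' hunit)) a)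
    rwa [← Con.coe_one, Con.eq] at this
  exact eq_top_iff.2 fun a b _ => ρ.trans (hone a) (ρ.symm (hone b))

/-- Every group homomorphic image of `M` is trivial; consequently the only group
congruence on `M` (a congruence whose quotient is a group, i.e. every class is
invertible) is the universal congruence. -/
theorem stmt_12 :
    (∀ (G : Type*) [Group G] (f : M →* G) (m : M), f m = 1) ∧
    (∀ ρ : Con M, (∀ a : M, ∃ b : M, ρ (a * b) 1 ∧ ρ (b * a) 1) → ρ = ⊤) := by
  refine ⟨fun G _ f m => DFunLike.congr_fun (monoidHom_eq_one f) m, fun ρ hinv => ?_⟩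
  refine ρ.eq_top_of_forall_monoidHom_eq_one (fun a => ?_) monoidHom_eq_one
  obtain ⟨b, hab, hba⟩ := hinv a
  exact Con.isUnit_coe hab hba
end

section
/- Let ρ be a congruence on the monoid M presented by ⟨x, y, e | e³ = e, xey = y, xe²y = x, xy = 1⟩. If e ρ 1, then ρ is the universal congruence M × M. -/
/-! Collapsing `e` to `1` turns the relations `xey = y` and `xe²y = x` into `xy = y` and
`xy = x`, so with `xy = 1` all three generators collapse to `1`, and hence so does all of `M`. -/

theorem Con.eq_top_of_closure_eq_top {N : Type*} [Monoid N] {ρ : Con N} {S : Set N}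
    (hS : Submonoid.closure S = ⊤) (h : ∀ s ∈ S, ρ s 1) : ρ = ⊤ := by
  have h_one : ∀ n, ρ n 1 := by
    intro n
    have hle : Submonoid.closure S ≤ MonoidHom.mker ρ.mk' :=
      Submonoid.closure_le.2 fun s hs => ρ.eq.2 (h s hs)
    exact ρ.eq.1 (hle (hS ▸ Submonoid.mem_top n))
  exact eq_top_iff.2 fun a b _ => ρ.trans (h_one a) (ρ.symm (h_one b))

section

variable {ρ : Con M}

theorem Con.rel_Y_one_of_rel_E_one (hE : ρ E 1) : ρ Y 1 := by
  have h := ρ.mul (ρ.mul (ρ.refl X) hE) (ρ.refl Y)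
  rwa [X_mul_E_mul_Y, mul_one, X_mul_Y] at h

theorem Con.rel_X_one_of_rel_E_one (hE : ρ E 1) : ρ X 1 := by
  have h := ρ.mul (ρ.mul (ρ.mul (ρ.refl X) hE) hE) (ρ.refl Y)
  rwa [X_mul_E_mul_E_mul_Y, mul_one, mul_one, X_mul_Y] at h

end

/-- If a congruence on `M` relates `e` and `1`, it is universal. -/
theorem stmt_13 : ∀ ρ : Con M, ρ E 1 → ρ = ⊤ := by
  intro ρ hE
  refine ρ.eq_top_of_closure_eq_top (PresentedMonoid.closure_range_of rel) ?_
  rintro _ ⟨a, rfl⟩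
  cases a
  · exact ρ.rel_X_one_of_rel_E_one hE
  · exact ρ.rel_Y_one_of_rel_E_one hE
  · exact hE
end

section
/- Let ρ be a congruence on the monoid M presented by ⟨x, y, e | e³ = e, xey = y, xe²y = x, xy = 1⟩. If the image of y is right-invertible in the quotient M/ρ, i.e. if there exists w ∈ M with (y·w) ρ 1, then ρ is the universal congruence M × M. -/
/-!
In `M/ρ` we have `xy = 1`, and a right inverse `w` of `y` must be `x = xyw`, so `y` is a unit with
inverse `x`. Conjugating the relations `xey = y` and `xe²y = x` by `y` then gives `e = y` and
`e² = x`, so `x = y²`, and `e³ = e` becomes `y³ = y`, i.e. `y² = 1`. Hence `x`, `y`, `e` all become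
trivial in `M/ρ`, and since they generate `M`, `ρ` is universal.
-/

theorem PresentedMonoid.con_eq_top_of_rel_one {α : Type*}
    {rels : FreeMonoid α → FreeMonoid α → Prop} (ρ : Con (PresentedMonoid rels))
    (h : ∀ a, ρ (PresentedMonoid.of rels a) 1) : ρ = ⊤ := by
  have hmk : ρ.mk' = 1 := PresentedMonoid.ext rels fun a => ρ.eq.2 (h a)
  rw [← ρ.mk'_ker, hmk]
  ext
  exact iff_of_true rfl trivial

theorem eq_one_of_relations_of_mul_eq_one {N : Type*} [Monoid N] {x y e : N}
    (he : e * e * e = e) (hxey : x * e * y = y) (hxeey : x * e * e * y = x) (hxy : x * y = 1)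
    (hy : ∃ w, y * w = 1) : x = 1 ∧ y = 1 ∧ e = 1 := by
  obtain ⟨w, hw⟩ := hy
  have hwx : w = x := by rw [← one_mul w, ← hxy, mul_assoc, hw, mul_one]
  have hyx : y * x = 1 := hwx ▸ hw
  have conj (a : N) : a = y * (x * a * y) * x := calc
    a = y * x * a * (y * x) := by rw [hyx, one_mul, mul_one]
    _ = y * (x * a * y) * x := by simp only [mul_assoc]
  have hey : e = y := by rw [conj e, hxey, mul_assoc, hyx, mul_one]
  have heex : e * e = x := by rw [conj (e * e), ← mul_assoc x, hxeey, hyx, one_mul]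
  have hyy : y * y = 1 := by
    have hy3 : y * y * y = y := hey ▸ he
    rw [← one_mul (y * y), ← hxy, mul_assoc, ← mul_assoc y, hy3, hxy]
  have hx : x = 1 := by rw [← heex, hey, hyy]
  have hy : y = 1 := by rw [← hxy, hx, one_mul]
  exact ⟨hx, hy, hey.trans hy⟩

/-- If the image of `y` is right-invertible in `M/ρ`, then `ρ` is universal. -/
theorem stmt_16 : ∀ ρ : Con M, (∃ w : M, ρ (Y * w) 1) → ρ = ⊤ := by
  rintro ρ ⟨w, hw⟩
  have hquot {a b : M} (h : a = b) : (a : ρ.Quotient) = b := congrArg _ h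
  obtain ⟨hx, hy, he⟩ := eq_one_of_relations_of_mul_eq_one
    (x := (X : ρ.Quotient)) (y := Y) (e := E) (hquot E_mul_E_mul_E)
    (hquot X_mul_E_mul_Y) (hquot X_mul_E_mul_E_mul_Y)
    (hquot X_mul_Y) ⟨w, ρ.eq.2 hw⟩
  refine PresentedMonoid.con_eq_top_of_rel_one ρ fun a => ρ.eq.1 ?_
  cases a
  exacts [hx, hy, he]
end

section
/- Let ρ be a congruence on the monoid M presented by ⟨x, y, e | e³ = e, xey = y, xe²y = x, xy = 1⟩. If there exists u ∈ M with u ρ (x⁴·u), then ρ is the universal congruence M × M. -/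
/-!
Right-multiplying any `u ∈ M` brings it into the form `(y | ey | e²y)* xᵃ`, and a suitable power
of `x` on the left then collapses such a word to `1`. So `x^m u w = 1` for some `m, w`, and
multiplying `u ρ x⁴u` by `x^m` on the left and by `w` on the right gives `1 ρ x⁴`. In the quotient
`x` is then invertible, the relations force `y = e = x³` and `x² = x`, so every generator, hence
every element, is identified with `1`.
-/

theorem eq_one_of_pow_four_eq_one {N : Type*} [Monoid N] {x y e : N} (hxy : x * y = 1)
    (hxey : x * e * y = y) (hxeey : x * e * e * y = x) (hx : x ^ 4 = 1) :
    x = 1 ∧ y = 1 ∧ e = 1 := by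
  have hx_mul (n : ℕ) : x ^ (n + 4) = x ^ n := by rw [pow_add, hx, mul_one]
  have hy : y = x ^ 3 := by
    calc y = x ^ 4 * y := by rw [hx, one_mul]
      _ = x ^ 3 * (x * y) := by rw [pow_succ, mul_assoc]
      _ = x ^ 3 := by rw [hxy, mul_one]
  have he : e = x ^ 3 := by
    calc e = x ^ 4 * e * x ^ 4 := by rw [hx, one_mul, mul_one]
      _ = x ^ 3 * (x * e * y) * x := by rw [hy]; simp only [pow_succ, pow_zero, one_mul, mul_assoc]
      _ = x ^ (3 + 4) := by rw [hxey, hy, ← pow_add, ← pow_succ]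
      _ = x ^ 3 := hx_mul 3
  have hx2 : x ^ 2 = x := by
    rw [he, hy, ← pow_succ', ← pow_add, ← pow_add] at hxeey
    calc x ^ 2 = x ^ (2 + 4 + 4) := by rw [hx_mul, hx_mul]
      _ = x := hxeey
  have hx1 : x = 1 := by
    rw [← hx, show 4 = 2 * 2 from rfl, pow_mul, hx2, hx2]
  exact ⟨hx1, by rw [hy, hx1, one_pow], by rw [he, hx1, one_pow]⟩

namespace PresentedXYE

theorem X_mul_Y : X * Y = 1 := by
  simpa only [X, Y, PresentedMonoid.of, map_mul, map_one] using
    PresentedMonoid.mk_eq_mk_of_rel (rels := rel) (x := .of .x * .of .y) (y := 1)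
      (.inr <| .inr <| .inr ⟨rfl, rfl⟩)

theorem X_mul_E_mul_Y : X * E * Y = Y := by
  simpa only [X, Y, E, PresentedMonoid.of, map_mul] using
    PresentedMonoid.mk_eq_mk_of_rel (rels := rel) (x := .of .x * .of .e * .of .y) (y := .of .y)
      (.inr <| .inl ⟨rfl, rfl⟩)

theorem X_mul_E_mul_E_mul_Y : X * E * E * Y = X := by
  simpa only [X, Y, E, PresentedMonoid.of, map_mul] using
    PresentedMonoid.mk_eq_mk_of_rel (rels := rel) (x := .of .x * .of .e * .of .e * .of .y)
      (y := .of .x) (.inr <| .inr <| .inl ⟨rfl, rfl⟩)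

theorem E_mul_E_mul_E : E * E * E = E := by
  simpa only [E, PresentedMonoid.of, map_mul] using
    PresentedMonoid.mk_eq_mk_of_rel (rels := rel) (x := .of .e * .of .e * .of .e) (y := .of .e)
      (.inl ⟨rfl, rfl⟩)

theorem X_mul_Y_mul (u : M) : X * (Y * u) = u := by
  rw [← mul_assoc, X_mul_Y, one_mul]

theorem X_mul_E_mul_Y_mul (u : M) : X * (E * (Y * u)) = Y * u := by
  simp only [← mul_assoc, X_mul_E_mul_Y]

theorem X_mul_E_mul_E_mul_Y_mul (u : M) : X * (E * (E * (Y * u))) = X * u := by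
  simp only [← mul_assoc, X_mul_E_mul_E_mul_Y]

theorem E_mul_E_mul_E_mul (u : M) : E * (E * (E * u)) = E * u := by
  simp only [← mul_assoc, E_mul_E_mul_E]

theorem X_pow_mul_Y_pow (a : ℕ) : X ^ a * Y ^ a = 1 := by
  induction a with
  | zero => simp
  | succ a ih => rw [pow_succ, pow_succ', mul_assoc, ← mul_assoc X, X_mul_Y, one_mul, ih]

@[elab_as_elim]
theorem induction_on_left {p : M → Prop} (u : M) (one : p 1) (X_mul : ∀ u, p u → p (X * u))
    (Y_mul : ∀ u, p u → p (Y * u)) (E_mul : ∀ u, p u → p (E * u)) : p u := by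
  refine Submonoid.induction_of_closure_eq_top_left (PresentedMonoid.closure_range_of rel) u one ?_
  rintro _ ⟨_ | _ | _, rfl⟩
  exacts [X_mul, Y_mul, E_mul]

inductive IsNormal : M → Prop
  | X_pow (a : ℕ) : IsNormal (X ^ a)
  | Y_mul {u : M} : IsNormal u → IsNormal (Y * u)
  | EY_mul {u : M} : IsNormal u → IsNormal (E * (Y * u))
  | EEY_mul {u : M} : IsNormal u → IsNormal (E * (E * (Y * u)))

namespace IsNormal

theorem X_mul {u : M} (hu : IsNormal u) : IsNormal (X * u) := by
  induction hu with
  | X_pow a => exact pow_succ' X a ▸ X_pow (a + 1)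
  | Y_mul hu => rwa [X_mul_Y_mul]
  | EY_mul hu => rw [X_mul_E_mul_Y_mul]; exact Y_mul hu
  | EEY_mul _ ih => rwa [X_mul_E_mul_E_mul_Y_mul]

theorem exists_E_mul_mul {u : M} (hu : IsNormal u) : ∃ w, IsNormal (E * (u * w)) := by
  cases hu with
  | X_pow a =>
    refine ⟨Y ^ a * Y, ?_⟩
    rw [← mul_assoc (X ^ a), X_pow_mul_Y_pow, one_mul, ← mul_one Y, ← pow_zero X]
    exact EY_mul (X_pow 0)
  | Y_mul hu => exact ⟨1, (mul_one (Y * _)).symm ▸ EY_mul hu⟩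
  | EY_mul hu => exact ⟨1, (mul_one (E * _)).symm ▸ EEY_mul hu⟩
  | EEY_mul hu => exact ⟨1, by rw [mul_one, E_mul_E_mul_E_mul]; exact EY_mul hu⟩

theorem exists_X_pow_mul_mul_eq_one {u : M} (hu : IsNormal u) :
    ∃ m w, X ^ m * (u * w) = 1 := by
  induction hu with
  | X_pow a => exact ⟨0, Y ^ a, by rw [pow_zero, one_mul, X_pow_mul_Y_pow]⟩
  | Y_mul _ ih =>
    obtain ⟨m, w, h⟩ := ih
    refine ⟨m + 1, w, ?_⟩
    simpa only [pow_succ, mul_assoc, X_mul_Y_mul] using h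
  | EY_mul _ ih =>
    obtain ⟨m, w, h⟩ := ih
    refine ⟨m + 2, w, ?_⟩
    rw [pow_add]
    simpa only [pow_two, mul_assoc, X_mul_E_mul_Y_mul, X_mul_Y_mul] using h
  | @EEY_mul u _ ih =>
    obtain ⟨m, w, h⟩ := ih
    have h' : X ^ (m + 1) * (u * w) = X := by rw [pow_succ', mul_assoc, h, mul_one]
    refine ⟨m + 1, w * Y, ?_⟩
    calc X ^ (m + 1) * (E * (E * (Y * u)) * (w * Y)) = X ^ (m + 1) * (u * w) * Y := by
          simp only [pow_succ, mul_assoc, X_mul_E_mul_E_mul_Y_mul]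
      _ = 1 := by rw [h', X_mul_Y]

end IsNormal

theorem exists_mul_isNormal (u : M) : ∃ w, IsNormal (u * w) := by
  induction u using induction_on_left with
  | one => exact ⟨1, by rw [mul_one, ← pow_zero X]; exact .X_pow 0⟩
  | X_mul u ih => obtain ⟨w, h⟩ := ih; exact ⟨w, (mul_assoc X u w).symm ▸ h.X_mul⟩
  | Y_mul u ih => obtain ⟨w, h⟩ := ih; exact ⟨w, (mul_assoc Y u w).symm ▸ h.Y_mul⟩
  | E_mul u ih =>
    obtain ⟨w, h⟩ := ih
    obtain ⟨w', h'⟩ := h.exists_E_mul_mul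
    exact ⟨w * w', by simpa only [mul_assoc] using h'⟩

theorem exists_X_pow_mul_mul_eq_one (u : M) : ∃ m w, X ^ m * (u * w) = 1 := by
  obtain ⟨w, hw⟩ := exists_mul_isNormal u
  obtain ⟨m, w', h⟩ := hw.exists_X_pow_mul_mul_eq_one
  exact ⟨m, w * w', by rwa [← mul_assoc u]⟩

theorem con_eq_top_of_one_X_pow_four (ρ : Con M) (h : ρ 1 (X ^ 4)) : ρ = ⊤ := by
  obtain ⟨hX, hY, hE⟩ := eq_one_of_pow_four_eq_one (x := ρ.mk' X) (y := ρ.mk' Y) (e := ρ.mk' E)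
    (by rw [← map_mul, X_mul_Y, map_one]) (by rw [← map_mul, ← map_mul, X_mul_E_mul_Y])
    (by rw [← map_mul, ← map_mul, ← map_mul, X_mul_E_mul_E_mul_Y])
    (by rw [← map_pow]; exact (ρ.eq.mpr h).symm)
  have hmk : ρ.mk' = 1 := PresentedMonoid.ext rel fun
    | .x => hX
    | .y => hY
    | .e => hE
  rw [← ρ.mk'_ker, hmk, eq_top_iff]
  exact fun _ _ _ ↦ (Con.ker_rel _).mpr rfl

end PresentedXYE

open PresentedXYE in
/-- If some `u ∈ M` satisfies `u ρ x⁴·u`, then `ρ` is universal. -/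
theorem stmt_18 : ∀ ρ : Con M, (∃ u : M, ρ u (X ^ 4 * u)) → ρ = ⊤ := by
  rintro ρ ⟨u, hu⟩
  obtain ⟨m, w, huw⟩ := exists_X_pow_mul_mul_eq_one u
  apply con_eq_top_of_one_X_pow_four
  have := ρ.mul (ρ.refl (X ^ m)) (ρ.mul hu (ρ.refl w))
  rwa [huw, mul_assoc, ← mul_assoc, ← pow_mul_comm, mul_assoc, huw, mul_one] at this
end
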